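/- arXiv:1802.08203 — 5 statements merged into one kernel-verified Lean document; each statement's English description precedes it below -/
import Mathlib

section
/- Let R be a Noetherian local ring and M a finite R-module with depth_R(M) ≥ 2. Then for any finite R-module M', the R-module Hom_R(M', M) also has depth ≥ 2. -/
/-!
Let `x, y` be `M`-regular. Then `x` is regular on `Hom(M', M)`, computed pointwise. If
`y • f = x • g` in `Hom(M', M)`, then `y • f m' ∈ x • M` for each `m'`, so `f m' ∈ x • M` since `y`
is regular on `M ⧸ x • M`. Left exactness of `Hom(M', -)` applied to `0 → M →[x] M` then writes
`f = x • f'`, i.e. `y` is regular on `Hom(M', M) ⧸ x • Hom(M', M)`.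
-/

open IsLocalRing

/-- `depthGE R M n` : the `m`-depth of the `R`-module `M` is at least `n`, expressed as the
existence of a weakly regular sequence of length `n` with entries in the maximal ideal. -/
def depthGE (R : Type*) [CommRing R] [IsLocalRing R]
    (M : Type*) [AddCommGroup M] [Module R M] (n : ℕ) : Prop :=
  ∃ rs : List R, rs.length = n ∧ (∀ r ∈ rs, r ∈ maximalIdeal R) ∧
    RingTheory.Sequence.IsWeaklyRegular M rs

open Pointwise RingTheory.Sequence

namespace IsSMulRegular

variable {R M N : Type*} [CommRing R] [AddCommGroup M] [Module R M] [AddCommGroup N] [Module R N]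
  {x : R}

theorem linearMap (hx : IsSMulRegular M x) : IsSMulRegular (N →ₗ[R] M) x :=
  fun _ _ h ↦ LinearMap.ext fun n ↦ hx (LinearMap.congr_fun h n)

theorem exists_smul_eq_of_forall_mem_smul_top (hx : IsSMulRegular M x) (f : N →ₗ[R] M)
    (hf : ∀ n, f n ∈ x • (⊤ : Submodule R M)) : ∃ g : N →ₗ[R] M, x • g = f := by
  let mulX := DistribSMul.toLinearMap R M x
  have hf' : ∀ n, f n ∈ LinearMap.range mulX := by
    simpa only [Submodule.pointwise_smul_def, Submodule.map_top] using hf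
  refine ⟨(LinearEquiv.ofInjective mulX hx).symm.toLinearMap ∘ₗ f.codRestrict _ hf', ?_⟩
  ext n
  exact congrArg Subtype.val ((LinearEquiv.ofInjective mulX hx).apply_symm_apply ⟨f n, hf' n⟩)

end IsSMulRegular

theorem RingTheory.Sequence.IsWeaklyRegular.linearMap_pair {R M N : Type*} [CommRing R]
    [AddCommGroup M] [Module R M] [AddCommGroup N] [Module R N] {x y : R}
    (h : IsWeaklyRegular M [x, y]) : IsWeaklyRegular (N →ₗ[R] M) [x, y] := by
  rw [isWeaklyRegular_cons_iff, isWeaklyRegular_singleton_iff] at h ⊢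
  obtain ⟨hx, hy⟩ := h
  refine ⟨hx.linearMap, (isSMulRegular_quotient_iff_mem_of_smul_mem _ y).2 fun f hf ↦ ?_⟩
  obtain ⟨g, -, hg⟩ := (Submodule.mem_smul_pointwise_iff_exists _ _ _).1 hf
  have hfx : ∀ n, f n ∈ x • (⊤ : Submodule R M) := fun n ↦
    mem_of_isSMulRegular_quotient_of_smul_mem hy <|
      (Submodule.mem_smul_pointwise_iff_exists _ _ _).2
        ⟨g n, trivial, by rw [← LinearMap.smul_apply, hg, LinearMap.smul_apply]⟩
  obtain ⟨f', hf'⟩ := hx.exists_smul_eq_of_forall_mem_smul_top f hfx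
  exact (Submodule.mem_smul_pointwise_iff_exists _ _ _).2 ⟨f', trivial, hf'⟩

theorem hom_depth_ge_two_general (R : Type*) [CommRing R] [IsLocalRing R]
    (M M' : Type*) [AddCommGroup M] [Module R M]
    [AddCommGroup M'] [Module R M']
    (hM : depthGE R M 2) :
    depthGE R (M' →ₗ[R] M) 2 := by
  obtain ⟨rs, hlen, hmem, hreg⟩ := hM
  obtain ⟨x, y, rfl⟩ := List.length_eq_two.1 hlen
  exact ⟨[x, y], rfl, hmem, hreg.linearMap_pair⟩

theorem hom_depth_ge_two (R : Type*) [CommRing R] [IsLocalRing R] [IsNoetherianRing R]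
    (M M' : Type*) [AddCommGroup M] [Module R M] [Module.Finite R M]
    [AddCommGroup M'] [Module R M'] [Module.Finite R M']
    (hM : depthGE R M 2) :
    depthGE R (M' →ₗ[R] M) 2 :=
  hom_depth_ge_two_general R M M' hM
end

section
/- Let R be a Noetherian local ring, M a finite R-module, f ∈ R a nonzerodivisor on M, and g ∈ R a nonzerodivisor on M/fM. Then for any finite R-module M', g is a nonzerodivisor on Hom_R(M', M)/f·Hom_R(M', M). -/
open Pointwise

/-- For a Noetherian local ring `R`, finite `R`-modules `M`, `M'`, an element `f ∈ R` that is a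
nonzerodivisor on `M`, and an element `g ∈ R` that is a nonzerodivisor on `M/fM`, the element
`g` is a nonzerodivisor on `Hom_R(M', M)/f·Hom_R(M', M)`. -/
theorem smul_regular_hom_quotient (R : Type*) [CommRing R] [IsLocalRing R] [IsNoetherianRing R]
    (M M' : Type*) [AddCommGroup M] [Module R M] [Module.Finite R M]
    [AddCommGroup M'] [Module R M'] [Module.Finite R M']
    (f g : R) (hf : IsSMulRegular M f)
    (hg : IsSMulRegular (M ⧸ (f • (⊤ : Submodule R M))) g) :
    IsSMulRegular ((M' →ₗ[R] M) ⧸ (f • (⊤ : Submodule R (M' →ₗ[R] M)))) g := by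
  have key : ∀ χ : M' →ₗ[R] M, g • χ ∈ f • (⊤ : Submodule R (M' →ₗ[R] M)) →
      χ ∈ f • (⊤ : Submodule R (M' →ₗ[R] M)) := by
    intro χ hχ
    rw [← SetLike.mem_coe, Submodule.coe_pointwise_smul] at hχ
    obtain ⟨ψ, -, hψ⟩ := Set.mem_smul_set.mp hχ
    have hmem : ∀ x, χ x ∈ f • (⊤ : Submodule R M) := by
      intro x
      have h0 : g • (Submodule.Quotient.mk (χ x) : M ⧸ (f • (⊤ : Submodule R M))) = 0 := by
        rw [← Submodule.Quotient.mk_smul]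
        have : g • χ x = f • ψ x := by
          have := congrArg (fun (h : M' →ₗ[R] M) => h x) hψ
          simpa using this.symm
        rw [this]
        rw [Submodule.Quotient.mk_eq_zero]
        exact Submodule.smul_mem_pointwise_smul _ _ _ trivial
      have h1 : g • (Submodule.Quotient.mk (χ x) : M ⧸ (f • (⊤ : Submodule R M))) =
          g • (0 : M ⧸ (f • (⊤ : Submodule R M))) := by rw [smul_zero]; exact h0
      have := hg h1
      rwa [Submodule.Quotient.mk_eq_zero] at this
    have hmem' : ∀ x, ∃ y, f • y = χ x := by
      intro x
      have h := hmem x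
      rw [← SetLike.mem_coe, Submodule.coe_pointwise_smul] at h
      obtain ⟨y, -, hy⟩ := Set.mem_smul_set.mp h
      exact ⟨y, hy⟩
    choose y hy using hmem'
    rw [← SetLike.mem_coe, Submodule.coe_pointwise_smul]
    refine Set.mem_smul_set.mpr ⟨⟨⟨y, ?_⟩, ?_⟩, trivial, ?_⟩
    · intro a b
      apply hf
      simp only [smul_add]
      show f • y (a + b) = f • y a + f • y b
      rw [hy a, hy b, hy (a + b), map_add]
    · intro r a
      apply hf
      show f • y (r • a) = f • (r • y a)
      rw [hy (r • a), map_smul, smul_comm, hy a]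
    · ext x
      exact hy x
  intro a b hab
  obtain ⟨φ, rfl⟩ := Submodule.Quotient.mk_surjective _ a
  obtain ⟨ψ, rfl⟩ := Submodule.Quotient.mk_surjective _ b
  rw [Submodule.Quotient.eq]
  apply key
  have : g • (φ - ψ) = g • φ - g • ψ := smul_sub g φ ψ
  rw [this, ← Submodule.Quotient.mk_eq_zero (p := f • (⊤ : Submodule R (M' →ₗ[R] M))),
    Submodule.Quotient.mk_sub, Submodule.Quotient.mk_smul, Submodule.Quotient.mk_smul]
  change g • _ = g • _ at hab
  rw [hab, sub_self]
end

section
/- Let (φ, ψ) be a matrix factorization of an element w in a commutative ring S, i.e. φ, ψ : S^a → S^a with ψ∘φ = φ∘ψ = w·id. Then for elements u, v ∈ S', where S' = S[u,v] or any commutative S-algebra containing u, v, the pair of block matrices Φ = [[u, ψ],[φ, -v]] and Ψ = [[v, ψ],[φ, -u]] on S'^a ⊕ S'^a satisfy Ψ∘Φ = Φ∘Ψ = (w + uv)·id, i.e. (Φ, Ψ) is a matrix factorization of w + uv. -/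
open Matrix

/-- Knörrer construction on matrix factorizations: if `(φ, ψ)` is a matrix factorization of
`w ∈ S`, i.e. `φψ = ψφ = w·1`, then for elements `u, v` of a commutative `S`-algebra `S'`,
the block matrices `Φ = [[u, ψ],[φ, -v]]` and `Ψ = [[v, ψ],[φ, -u]]` (with entries of `φ`, `ψ`
mapped into `S'`) form a matrix factorization of `w + uv`: `ΨΦ = ΦΨ = (w + uv)·1`. -/
theorem knorrer_matrix_factorization
    (S : Type*) [CommRing S] (S' : Type*) [CommRing S'] [Algebra S S']
    (a : ℕ) (w : S) (φ ψ : Matrix (Fin a) (Fin a) S)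
    (hφψ : φ * ψ = w • (1 : Matrix (Fin a) (Fin a) S))
    (hψφ : ψ * φ = w • (1 : Matrix (Fin a) (Fin a) S))
    (u v : S') :
    letI φ' := φ.map (algebraMap S S')
    letI ψ' := ψ.map (algebraMap S S')
    letI Φ := Matrix.fromBlocks (u • 1) ψ' φ' (-(v • (1 : Matrix (Fin a) (Fin a) S')))
    letI Ψ := Matrix.fromBlocks (v • 1) ψ' φ' (-(u • (1 : Matrix (Fin a) (Fin a) S')))
    Ψ * Φ = (algebraMap S S' w + u * v) • 1 ∧
    Φ * Ψ = (algebraMap S S' w + u * v) • 1 := by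
  have h1 : φ.map (algebraMap S S') * ψ.map (algebraMap S S')
      = algebraMap S S' w • (1 : Matrix (Fin a) (Fin a) S') := by
    rw [← Matrix.map_mul, hφψ]
    ext i j
    simp [Matrix.one_apply, apply_ite (algebraMap S S'), Algebra.smul_def, Matrix.algebraMap_matrix_apply]
  have h2 : ψ.map (algebraMap S S') * φ.map (algebraMap S S')
      = algebraMap S S' w • (1 : Matrix (Fin a) (Fin a) S') := by
    rw [← Matrix.map_mul, hψφ]
    ext i j
    simp [Matrix.one_apply, apply_ite (algebraMap S S'), Algebra.smul_def, Matrix.algebraMap_matrix_apply]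
  have key : ∀ x : S', x • (1 : Matrix (Fin a ⊕ Fin a) (Fin a ⊕ Fin a) S')
      = Matrix.fromBlocks (x • 1) 0 0 (x • 1) := fun x => by
    rw [← Matrix.fromBlocks_one, Matrix.fromBlocks_smul, smul_zero]
  constructor <;>
  · rw [Matrix.fromBlocks_multiply, key]
    simp only [h1, h2, Matrix.smul_mul, Matrix.mul_smul, Matrix.one_mul, Matrix.mul_one,
      Matrix.mul_neg, Matrix.neg_mul, neg_neg, smul_neg, smul_smul, add_neg_cancel,
      neg_add_cancel, add_smul]
    simp only [mul_comm v u]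
    rw [add_comm ((u * v) • (1 : Matrix (Fin a) (Fin a) S'))]
end

section
/- Let R be a Noetherian ℕ-graded ring with R₀ a field and irrelevant ideal m, and let M be a finitely generated ℤ-graded R-module such that the localization M_m is free over R_m. If Spec R \ {m} is connected (e.g. Proj R is connected) then M is a free graded R-module, i.e. isomorphic to a finite direct sum of shifts R(d_i). -/
/-!
Take an irredundant finite set of homogeneous generators `xᵢ` of `M`, so `φ : Rʳ → M`,
`c ↦ ∑ cᵢ xᵢ`, is onto. Graded Nakayama: if a relation `c` had some `cᵢ ∉ 𝔪`, its component of
degree `deg xᵢ` would express `xᵢ` through the other generators with a nonzero scalar as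
coefficient; so `ker φ ⊆ 𝔪 Rʳ`. Localizing at `𝔪`, the surjection `φ_𝔪` onto the projective
module `M_𝔪` splits, so its kernel `K` is a finitely generated direct summand with `K ⊆ 𝔪 K`,
and `K = 0` by Nakayama. Hence every homogeneous component of a relation is killed by some
`v ∉ 𝔪`, whose degree `0` part is a nonzero scalar, so it vanishes and `φ` is injective.
Shifting the `i`-th copy of `R` by `-deg xᵢ` makes `φ⁻¹` graded.
-/

open DirectSum

open IsLocalRing in
theorem LinearMap.ker_eq_bot_of_ker_le_maximalIdeal_smul_top {A F P : Type*} [CommRing A]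
    [IsLocalRing A] [AddCommGroup F] [Module A F] [Module.Finite A F] [AddCommGroup P] [Module A P]
    [Module.Projective A P] (ψ : F →ₗ[A] P) (hψ : Function.Surjective ψ)
    (hker : ker ψ ≤ maximalIdeal A • ⊤) : ker ψ = ⊥ := by
  have : Module.Finite A P := .of_surjective ψ hψ
  have : Module.FinitePresentation A P := Module.finitePresentation_of_projective A P
  obtain ⟨σ, hσ⟩ := Module.projective_lifting_property ψ LinearMap.id hψ
  -- `id - σ ∘ ψ` is a projection of `F` onto `ker ψ`
  let π := LinearMap.id - σ ∘ₗ ψ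
  have hπ_ker : Submodule.map π ⊤ ≤ ker ψ := by
    rintro _ ⟨z, -, rfl⟩
    simpa [π, sub_eq_zero] using congr($hσ (ψ z)).symm
  have hπ_fix : ∀ z ∈ ker ψ, π z = z := fun z hz => by simp_all [π]
  refine Submodule.eq_bot_of_le_smul_of_le_jacobson_bot _ _ (Module.FinitePresentation.fg_ker ψ hψ)
    (fun z hz => ?_) (maximalIdeal_le_jacobson ⊥)
  rw [← hπ_fix z hz]
  exact Submodule.smul_mono le_rfl hπ_ker (Submodule.map_smul'' _ _ π ▸ ⟨z, hker hz, rfl⟩)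

theorem Ideal.mem_smul_top_pi {R ι : Type*} [CommSemiring R] [Fintype ι] {I : Ideal R} {c : ι → R}
    (hc : ∀ i, c i ∈ I) : c ∈ I • (⊤ : Submodule R (ι → R)) := by
  classical
  rw [pi_eq_sum_univ c]
  exact Submodule.sum_mem _ fun i _ => Submodule.smul_mem_smul (hc i) trivial

theorem LinearMap.exists_smul_eq_zero_of_ker_le_smul_top {R F M : Type*} [CommRing R]
    (p : Ideal R) [p.IsPrime] [AddCommGroup F] [Module R F] [Module.Finite R F]
    [AddCommGroup M] [Module R M]
    [Module.Projective (Localization.AtPrime p) (LocalizedModule p.primeCompl M)]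
    (φ : F →ₗ[R] M) (hφ : Function.Surjective φ) (hker : ker φ ≤ p • ⊤) {c : F} (hc : φ c = 0) :
    ∃ v ∈ p.primeCompl, v • c = 0 := by
  let Rₚ := Localization.AtPrime p
  let f := LocalizedModule.mkLinearMap p.primeCompl F
  let φₚ := (IsLocalizedModule.map p.primeCompl f (LocalizedModule.mkLinearMap p.primeCompl M)
    φ).extendScalarsOfIsLocalization p.primeCompl Rₚ
  have : Module.Finite Rₚ (LocalizedModule p.primeCompl F) :=
    Module.Finite.of_isLocalizedModule p.primeCompl f
  have hφₚ : ker φₚ = ⊥ := by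
    refine ker_eq_bot_of_ker_le_maximalIdeal_smul_top φₚ
      (IsLocalizedModule.map_surjective _ _ _ φ hφ) ?_
    rw [← localized'_ker_eq_ker_localizedMap Rₚ p.primeCompl f,
      ← Localization.AtPrime.map_eq_maximalIdeal, ← Ideal.localized'_eq_map Rₚ p.primeCompl,
      ← Submodule.localized'_top Rₚ p.primeCompl f, ← Submodule.localized'_smul]
    exact fun _ ⟨c, hc, s, h⟩ => ⟨c, hker hc, s, h⟩
  have : f c = 0 := by
    rw [← Submodule.mem_bot Rₚ, ← hφₚ, mem_ker]
    change IsLocalizedModule.map _ f _ φ (f c) = 0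
    rw [IsLocalizedModule.map_apply, hc, map_zero]
  obtain ⟨v, hv⟩ := (IsLocalizedModule.eq_zero_iff p.primeCompl f).mp this
  exact ⟨v, v.2, hv⟩

theorem Submodule.mem_span_image_erase_of_sum_smul_eq_zero {R M ι : Type*} [Ring R]
    [AddCommGroup M] [Module R M] [Fintype ι] [DecidableEq ι] {v : ι → M} {c : ι → R}
    (h : ∑ i, c i • v i = 0) {i : ι} (hi : IsUnit (c i)) :
    v i ∈ span R (v '' ↑(Finset.univ.erase i)) := by
  rw [← Submodule.smul_mem_iff_of_isUnit _ hi,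
    eq_neg_of_add_eq_zero_left ((Finset.add_sum_erase _ _ (Finset.mem_univ i)).trans h)]
  exact neg_mem (sum_mem fun j hj => smul_mem _ _ (subset_span (Set.mem_image_of_mem _ hj)))

theorem Submodule.exists_finset_subset_irredundant_span_eq_top {R M : Type*} [Semiring R]
    [AddCommMonoid M] [Module R M] {s : Finset M} (hs : span R (s : Set M) = ⊤) :
    ∃ t ⊆ s, span R (t : Set M) = ⊤ ∧ ∀ x ∈ t, x ∉ span R ((t : Set M) \ {x}) := by
  classical
  obtain ⟨t, ⟨hts, ht⟩, hmin⟩ :=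
    wellFounded_lt.has_min {t : Finset M | t ⊆ s ∧ span R (t : Set M) = ⊤} ⟨s, subset_rfl, hs⟩
  refine ⟨t, hts, ht, fun x hx hspan =>
    hmin (t.erase x) ⟨(t.erase_subset x).trans hts, ?_⟩ (Finset.erase_ssubset hx)⟩
  rw [Finset.coe_erase, ← ht, ← span_insert_eq_span hspan, Set.insert_sdiff_singleton,
    Set.insert_eq_of_mem (Finset.mem_coe.mpr hx)]

theorem exists_finset_homogeneous_span {R M τ : Type*} [Semiring R] [AddCommMonoid M]
    [Module R M] [Module.Finite R M] [SetLike τ M] [AddSubmonoidClass τ M] (ℳ : ℤ → τ)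
    [Decomposition ℳ] :
    ∃ s : Finset M, (∀ x ∈ s, ∃ j, x ∈ ℳ j) ∧ Submodule.span R (s : Set M) = ⊤ := by
  classical
  obtain ⟨s, hs⟩ := Module.Finite.fg_top (R := R) (M := M)
  refine ⟨s.biUnion fun g => (decompose ℳ g).support.image fun j => (decompose ℳ g j : M), ?_, ?_⟩
  · simp only [Finset.mem_biUnion, Finset.mem_image]
    rintro _ ⟨g, -, j, -, rfl⟩
    exact ⟨j, SetLike.coe_mem _⟩
  · rw [eq_top_iff, ← hs, Submodule.span_le]
    intro g hg
    rw [SetLike.mem_coe, ← sum_support_decompose ℳ g]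
    exact sum_mem fun j hj => Submodule.subset_span
      (Finset.mem_biUnion.mpr ⟨g, hg, Finset.mem_image_of_mem _ hj⟩)

namespace GradedRing

variable {A σ : Type*} [Semiring A] [SetLike σ A] [AddSubmonoidClass σ A] (𝒜 : ℕ → σ)
  [GradedRing 𝒜]

/-- The degree `n` component for an integer `n` (zero when `n < 0`), so that it can be shifted by
the degrees of a `ℤ`-graded module. -/
def intProj (n : ℤ) : A →+ A :=
  if 0 ≤ n then proj 𝒜 n.toNat else 0

variable {𝒜}

theorem intProj_of_neg {n : ℤ} (hn : n < 0) (a : A) : intProj 𝒜 n a = 0 := by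
  simp [intProj, not_le.mpr hn]

theorem intProj_mem {n : ℤ} (hn : 0 ≤ n) (a : A) : intProj 𝒜 n a ∈ 𝒜 n.toNat := by
  simp only [intProj, if_pos hn, proj_apply]
  exact SetLike.coe_mem _

@[simp]
theorem intProj_natCast (n : ℕ) (a : A) : intProj 𝒜 n a = decompose 𝒜 a n := by
  simp [intProj]

@[simp]
theorem intProj_zero (a : A) : intProj 𝒜 0 a = decompose 𝒜 a 0 :=
  intProj_natCast 0 a

theorem intProj_of_mem {a : A} {i : ℕ} (ha : a ∈ 𝒜 i) (n : ℤ) :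
    intProj 𝒜 n a = if (i : ℤ) = n then a else 0 := by
  rcases lt_or_ge n 0 with hn | hn
  · rw [intProj_of_neg hn, if_neg (by omega)]
  · obtain ⟨n, rfl⟩ := Int.eq_ofNat_of_zero_le hn
    simp only [intProj_natCast, Nat.cast_inj]
    split_ifs with h
    · exact decompose_of_mem_same 𝒜 (h ▸ ha)
    · exact decompose_of_mem_ne 𝒜 ha h

theorem eq_zero_of_forall_intProj_eq_zero {a : A} (h : ∀ n : ℤ, intProj 𝒜 n a = 0) : a = 0 := by
  classical
  rw [← sum_support_decompose 𝒜 a]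
  exact Finset.sum_eq_zero fun n _ => by simpa using h n

end GradedRing

open GradedRing

section GradedModule

variable {R σ : Type*} [Semiring R] [SetLike σ R] [AddSubmonoidClass σ R] (𝒜 : ℕ → σ)
  [GradedRing 𝒜] {M τ : Type*} [AddCommMonoid M] [Module R M] [SetLike τ M]
  [AddSubmonoidClass τ M] (ℳ : ℤ → τ) [Decomposition ℳ]

theorem decompose_smul_of_mem
    (hsmul : ∀ (i : ℕ) (j : ℤ) (r : R) (x : M), r ∈ 𝒜 i → x ∈ ℳ j → r • x ∈ ℳ (i + j))
    {x : M} {e : ℤ} (hx : x ∈ ℳ e) (r : R) (t : ℤ) :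
    (decompose ℳ (r • x) t : M) = intProj 𝒜 (t - e) r • x := by
  classical
  induction r using Decomposition.inductionOn 𝒜 with
  | zero => simp
  | @homogeneous i r =>
    have hr := r.2
    rw [intProj_of_mem hr]
    split_ifs with h
    · exact decompose_of_mem_same ℳ (show (i : ℤ) + e = t by omega ▸ hsmul _ _ _ _ hr hx)
    · rw [zero_smul]
      exact decompose_of_mem_ne ℳ (hsmul _ _ _ _ hr hx) (by omega)
  | add a b ha hb => simp [add_smul, ha, hb]

theorem decompose_linearCombination
    (hsmul : ∀ (i : ℕ) (j : ℤ) (r : R) (x : M), r ∈ 𝒜 i → x ∈ ℳ j → r • x ∈ ℳ (i + j))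
    {ι : Type*} [Fintype ι] {x : ι → M} {deg : ι → ℤ}
    (hx : ∀ i, x i ∈ ℳ (deg i)) (c : ι → R) (t : ℤ) :
    (decompose ℳ (Fintype.linearCombination R x c) t : M) =
      Fintype.linearCombination R x (fun i => intProj 𝒜 (t - deg i) (c i)) := by
  classical
  simp [Fintype.linearCombination_apply, decompose_sum, decompose_smul_of_mem 𝒜 ℳ hsmul (hx _)]

end GradedModule

section Irrelevant

variable {k R : Type*} [Field k] [CommRing R] [Algebra k R] {𝒜 : ℕ → Submodule k R}
  [GradedAlgebra 𝒜]

theorem isUnit_decompose_zero_of_notMem_irrelevant (h0 : 𝒜 0 ≤ 1) {a : R}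
    (ha : a ∉ HomogeneousIdeal.irrelevant 𝒜) : IsUnit (decompose 𝒜 a 0 : R) := by
  obtain ⟨u, hu⟩ := Submodule.mem_one.mp (h0 (decompose 𝒜 a 0).2)
  rw [← hu]
  refine (IsUnit.mk0 u ?_).map _
  rintro rfl
  exact ha ((HomogeneousIdeal.mem_irrelevant_iff 𝒜 a).mpr (by rw [proj_apply, ← hu, map_zero]))

theorem intProj_eq_zero_of_mul_eq_zero (h0 : 𝒜 0 ≤ 1) {v : R}
    (hv : v ∉ HomogeneousIdeal.irrelevant 𝒜) {a : R} {n : ℤ} (h : v * intProj 𝒜 n a = 0) :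
    intProj 𝒜 n a = 0 := by
  rcases lt_or_ge n 0 with hn | hn
  · exact intProj_of_neg hn a
  have hdeg := coe_decompose_mul_add_of_right_mem 𝒜 (i := 0) (intProj_mem hn a) (a := v)
  rw [h, decompose_zero, DirectSum.zero_apply, ZeroMemClass.coe_zero] at hdeg
  exact (isUnit_decompose_zero_of_notMem_irrelevant h0 hv).mul_right_eq_zero.mp hdeg.symm

end Irrelevant

section GradedFree

variable {k R : Type*} [Field k] [CommRing R] [Algebra k R] (𝒜 : ℕ → Submodule k R)
  [GradedAlgebra 𝒜] {M τ : Type*} [AddCommGroup M] [Module R M] [SetLike τ M]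
  [AddSubmonoidClass τ M] (ℳ : ℤ → τ) [Decomposition ℳ]

theorem coeff_mem_irrelevant_of_irredundant
    (hsmul : ∀ (i : ℕ) (j : ℤ) (r : R) (x : M), r ∈ 𝒜 i → x ∈ ℳ j → r • x ∈ ℳ (i + j))
    (h0 : 𝒜 0 ≤ 1) {s : Finset M} {deg : s → ℤ}
    (hdeg : ∀ x : s, (x : M) ∈ ℳ (deg x)) (hirr : ∀ x ∈ s, x ∉ Submodule.span R ((s : Set M) \ {x}))
    {c : s → R} (hc : Fintype.linearCombination R Subtype.val c = 0) (x : s) :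
    c x ∈ HomogeneousIdeal.irrelevant 𝒜 := by
  classical
  by_contra hx
  -- in degree `deg x`, the relation `c` has the unit coefficient `(c x)₀` at `x`
  have hrel := decompose_linearCombination 𝒜 ℳ hsmul hdeg c (deg x)
  rw [hc, decompose_zero, DirectSum.zero_apply, ZeroMemClass.coe_zero,
    Fintype.linearCombination_apply, eq_comm] at hrel
  have hunit : IsUnit (intProj 𝒜 (deg x - deg x) (c x)) := by
    simpa using isUnit_decompose_zero_of_notMem_irrelevant h0 hx
  refine hirr x x.2 (Submodule.span_mono ?_
    (Submodule.mem_span_image_erase_of_sum_smul_eq_zero hrel hunit))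
  rintro _ ⟨y, hy, rfl⟩
  exact ⟨y.2, Subtype.coe_injective.ne (Finset.ne_of_mem_erase hy)⟩

theorem linearCombination_injective_of_ker_irrelevant
    (hsmul : ∀ (i : ℕ) (j : ℤ) (r : R) (x : M), r ∈ 𝒜 i → x ∈ ℳ j → r • x ∈ ℳ (i + j))
    (h0 : 𝒜 0 ≤ 1)
    [(HomogeneousIdeal.irrelevant 𝒜).toIdeal.IsPrime]
    [Module.Projective (Localization.AtPrime (HomogeneousIdeal.irrelevant 𝒜).toIdeal)
      (LocalizedModule (HomogeneousIdeal.irrelevant 𝒜).toIdeal.primeCompl M)]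
    {ι : Type*} [Fintype ι] {x : ι → M} {deg : ι → ℤ} (hx : ∀ i, x i ∈ ℳ (deg i))
    (hsurj : Function.Surjective (Fintype.linearCombination R x))
    (hker : ∀ c, Fintype.linearCombination R x c = 0 → ∀ i, c i ∈ HomogeneousIdeal.irrelevant 𝒜) :
    Function.Injective (Fintype.linearCombination R x) := by
  refine (injective_iff_map_eq_zero _).mpr fun c hc => funext fun i =>
    eq_zero_of_forall_intProj_eq_zero (𝒜 := 𝒜) fun n => ?_
  have hrel : Fintype.linearCombination R x (fun j => intProj 𝒜 (n + deg i - deg j) (c j)) = 0 := by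
    rw [← decompose_linearCombination 𝒜 ℳ hsmul hx, hc, decompose_zero, DirectSum.zero_apply,
      ZeroMemClass.coe_zero]
  obtain ⟨v, hv, hvc⟩ := LinearMap.exists_smul_eq_zero_of_ker_le_smul_top
    (HomogeneousIdeal.irrelevant 𝒜).toIdeal _ hsurj
    (fun c hc => Ideal.mem_smul_top_pi (hker c hc)) hrel
  have hvi : v * intProj 𝒜 (n + deg i - deg i) (c i) = 0 := by
    simpa only [Pi.smul_apply, smul_eq_mul, Pi.zero_apply] using congr_fun hvc i
  simpa using intProj_eq_zero_of_mul_eq_zero h0 hv hvi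

theorem intProj_eq_self_of_linearCombination_mem
    (hsmul : ∀ (i : ℕ) (j : ℤ) (r : R) (x : M), r ∈ 𝒜 i → x ∈ ℳ j → r • x ∈ ℳ (i + j))
    {ι : Type*} [Fintype ι] {x : ι → M}
    {deg : ι → ℤ} (hx : ∀ i, x i ∈ ℳ (deg i))
    (hinj : Function.Injective (Fintype.linearCombination R x)) {c : ι → R} {j : ℤ}
    (hc : Fintype.linearCombination R x c ∈ ℳ j) (i : ι) :
    intProj 𝒜 (j - deg i) (c i) = c i :=
  congr_fun (hinj ((decompose_linearCombination 𝒜 ℳ hsmul hx c j).symm.trans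
    (decompose_of_mem_same ℳ hc))) i

end GradedFree

theorem graded_free_of_locally_free_at_irrelevant_general
    (k : Type*) [Field k] (R : Type*) [CommRing R] [Algebra k R]
    (𝒜 : ℕ → Submodule k R) [GradedAlgebra 𝒜]
    (h0 : 𝒜 0 ≤ (1 : Submodule k R))
    (M : Type*) [AddCommGroup M] [Module k M] [Module R M]
    [Module.Finite R M]
    (ℳ : ℤ → Submodule k M) [DirectSum.Decomposition ℳ]
    (hsmul : ∀ (i : ℕ) (j : ℤ) (r : R) (x : M), r ∈ 𝒜 i → x ∈ ℳ j → r • x ∈ ℳ (i + j))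
    (hm : ((HomogeneousIdeal.irrelevant 𝒜).toIdeal).IsPrime) :
    haveI := hm
    ∀ (_hfree : Module.Free (Localization.AtPrime (HomogeneousIdeal.irrelevant 𝒜).toIdeal)
        (LocalizedModule ((HomogeneousIdeal.irrelevant 𝒜).toIdeal).primeCompl M))
      (_hconn : IsConnected
        {p : PrimeSpectrum R | p.asIdeal ≠ (HomogeneousIdeal.irrelevant 𝒜).toIdeal}),
    ∃ (r : ℕ) (d : Fin r → ℤ) (e : M ≃ₗ[R] (Fin r → R)),
      ∀ (j : ℤ) (x : M), x ∈ ℳ j → ∀ i : Fin r,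
        if h : 0 ≤ j + d i then (e x) i ∈ 𝒜 ((j + d i).toNat) else (e x) i = 0 := by
  intro _ _
  obtain ⟨s₀, hs₀_hom, hs₀⟩ := exists_finset_homogeneous_span (R := R) ℳ
  obtain ⟨s, hss₀, hs, hirr⟩ := Submodule.exists_finset_subset_irredundant_span_eq_top hs₀
  choose deg hdeg using fun x : s => hs₀_hom x (hss₀ x.2)
  let φ := Fintype.linearCombination R ((↑) : s → M)
  have hsurj : Function.Surjective φ := by
    rwa [← LinearMap.range_eq_top, Fintype.range_linearCombination, Subtype.range_coe]
  have hinj : Function.Injective φ :=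
    linearCombination_injective_of_ker_irrelevant 𝒜 ℳ hsmul h0 hdeg hsurj fun c hc =>
      coeff_mem_irrelevant_of_irredundant 𝒜 ℳ hsmul h0 hdeg hirr hc
  let φ' := LinearEquiv.ofBijective φ ⟨hinj, hsurj⟩
  refine ⟨s.card, fun i => -deg (s.equivFin.symm i),
    φ'.symm ≪≫ₗ LinearEquiv.funCongrLeft R R s.equivFin.symm, fun j x hx i => ?_⟩
  have hhom := intProj_eq_self_of_linearCombination_mem 𝒜 ℳ hsmul hdeg hinj
    (show φ (φ'.symm x) ∈ ℳ j from (φ'.apply_symm_apply x).symm ▸ hx) (s.equivFin.symm i)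
  rw [← sub_eq_add_neg]
  split_ifs with hj
  · exact hhom ▸ intProj_mem hj _
  · exact hhom.symm.trans (intProj_of_neg (not_le.mp hj) _)

/-- Let `R` be a Noetherian ℕ-graded ring with `R₀ = k` a field and irrelevant maximal ideal
`m`, and let `M` be a finitely generated ℤ-graded `R`-module whose localization at `m` is free.
If the punctured spectrum `Spec R \ {m}` is connected, then `M` is free as a graded module:
`M ≅ ⊕ᵢ R(dᵢ)`, i.e. there is an `R`-linear isomorphism `M ≃ Rʳ` carrying the degree-`j`
part of `M` into the degree-`j + dᵢ` parts of the shifted copies of `R`. -/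
theorem graded_free_of_locally_free_at_irrelevant
    (k : Type*) [Field k] (R : Type*) [CommRing R] [Algebra k R] [IsNoetherianRing R]
    (𝒜 : ℕ → Submodule k R) [GradedAlgebra 𝒜]
    (h0 : 𝒜 0 ≤ (1 : Submodule k R))
    (M : Type*) [AddCommGroup M] [Module k M] [Module R M] [IsScalarTower k R M]
    [Module.Finite R M]
    (ℳ : ℤ → Submodule k M) [DirectSum.Decomposition ℳ]
    (hsmul : ∀ (i : ℕ) (j : ℤ) (r : R) (x : M), r ∈ 𝒜 i → x ∈ ℳ j → r • x ∈ ℳ (i + j))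
    (hm : ((HomogeneousIdeal.irrelevant 𝒜).toIdeal).IsPrime) :
    haveI := hm
    ∀ (_hfree : Module.Free (Localization.AtPrime (HomogeneousIdeal.irrelevant 𝒜).toIdeal)
        (LocalizedModule ((HomogeneousIdeal.irrelevant 𝒜).toIdeal).primeCompl M))
      (_hconn : IsConnected
        {p : PrimeSpectrum R | p.asIdeal ≠ (HomogeneousIdeal.irrelevant 𝒜).toIdeal}),
    ∃ (r : ℕ) (d : Fin r → ℤ) (e : M ≃ₗ[R] (Fin r → R)),
      ∀ (j : ℤ) (x : M), x ∈ ℳ j → ∀ i : Fin r,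
        if h : 0 ≤ j + d i then (e x) i ∈ 𝒜 ((j + d i).toNat) else (e x) i = 0 :=
  graded_free_of_locally_free_at_irrelevant_general k R 𝒜 h0 M ℳ hsmul hm
end

section
/- Let S be a ℤ-graded commutative ring and f ∈ S homogeneous. If the annihilator of f in S is nonzero after localizing at some prime p, then it is nonzero after localizing at the prime p* generated by the homogeneous elements of p. Consequently, a homogeneous element f is a nonzerodivisor on S if and only if it is a nonzerodivisor on S_p for every homogeneous prime p. -/
/-!
An element `x` survives in `S_p` exactly when its annihilator lies in `p`. If `x` annihilates
the homogeneous `f`, so does each homogeneous component `xᵢ`, and since `⋂ ann(xᵢ) ⊆ ann(x)`,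
primality of `p` gives some `i` with `ann(xᵢ) ⊆ p`. The annihilator of the homogeneous `xᵢ` is
homogeneous, hence contained in the homogeneous core `p*`, so `xᵢ` survives in `S_{p*}`.
For the criterion, a nonzero annihilator `x` of `f` survives at a maximal ideal containing
`ann(x)`, hence at its homogeneous core.
-/

open DirectSum LinearMap

section Localization

variable {R : Type*} [CommRing R]

theorem algebraMap_atPrime_eq_zero_iff (p : Ideal R) [p.IsPrime] (x : R) :
    algebraMap R (Localization.AtPrime p) x = 0 ↔ ¬ ker (toSpanSingleton R R x) ≤ p := by
  rw [IsLocalization.map_eq_zero_iff p.primeCompl, SetLike.not_le_iff_exists]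
  simp [Ideal.primeCompl, and_comm]

theorem Ideal.map_algebraMap_atPrime_ne_bot_iff (I p : Ideal R) [p.IsPrime] :
    I.map (algebraMap R (Localization.AtPrime p)) ≠ ⊥ ↔
      ∃ x ∈ I, ker (toSpanSingleton R R x) ≤ p := by
  rw [Ne, Ideal.map_eq_bot_iff_le_ker, SetLike.not_le_iff_exists]
  simp [algebraMap_atPrime_eq_zero_iff]

theorem not_isSMulRegular_of_map_ker_toSpanSingleton_ne_bot {T : Type*} [CommRing T]
    (φ : R →+* T) {f : R} (h : Ideal.map φ (ker (toSpanSingleton R R f)) ≠ ⊥) :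
    ¬ IsSMulRegular T (φ f) := by
  intro hreg
  obtain ⟨x, hx, hφx⟩ := SetLike.not_le_iff_exists.mp (mt (Ideal.map_eq_bot_iff_le_ker φ).mpr h)
  refine hφx (hreg.right_eq_zero_of_smul ?_)
  rw [smul_eq_mul, ← map_mul, mul_comm, ← smul_eq_mul, ← toSpanSingleton_apply, hx, map_zero]

end Localization

section Graded

variable {ι S σ : Type*} [CommRing S] [SetLike σ S] [AddSubmonoidClass σ S]
  (𝒜 : ι → σ)

theorem Ideal.isHomogeneous_ker_toSpanSingleton [DecidableEq ι] [AddRightCancelMonoid ι]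
    [GradedRing 𝒜] {f : S} {d : ι} (hf : f ∈ 𝒜 d) :
    Ideal.IsHomogeneous 𝒜 (ker (toSpanSingleton S S f)) := by
  intro i s hs
  rw [mem_ker, toSpanSingleton_apply, smul_eq_mul] at hs ⊢
  rw [← coe_decompose_mul_add_of_right_mem 𝒜 hf, hs, decompose_zero, DirectSum.zero_apply,
    ZeroMemClass.coe_zero]

theorem exists_ker_toSpanSingleton_decompose_le [DecidableEq ι] [AddMonoid ι] [GradedRing 𝒜]
    {p : Ideal S} [p.IsPrime] {x : S} (h : ker (toSpanSingleton S S x) ≤ p) :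
    ∃ i, ker (toSpanSingleton S S (decompose 𝒜 x i : S)) ≤ p := by
  classical
  have hinf : (decompose 𝒜 x).support.inf
      (fun i ↦ ker (toSpanSingleton S S (decompose 𝒜 x i : S))) ≤ ker (toSpanSingleton S S x) :=
    fun t ht ↦ by
      rw [Submodule.mem_finsetInf] at ht
      rw [mem_ker, toSpanSingleton_apply, ← sum_support_decompose 𝒜 x, Finset.smul_sum]
      exact Finset.sum_eq_zero fun i hi ↦ ht i hi
  obtain ⟨i, -, hi⟩ := (‹p.IsPrime›.inf_le').mp (hinf.trans h)
  exact ⟨i, hi⟩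

theorem Ideal.IsHomogeneous.le_homogeneousCore [DecidableEq ι] [AddMonoid ι] [GradedRing 𝒜]
    {I J : Ideal S} (hI : I.IsHomogeneous 𝒜) (h : I ≤ J) : I ≤ (J.homogeneousCore 𝒜).toIdeal :=
  hI.toIdeal_homogeneousCore_eq_self ▸ Ideal.homogeneousCore_mono 𝒜 h

theorem Ideal.IsHomogeneous.map_atPrime_homogeneousCore_ne_bot [DecidableEq ι]
    [AddRightCancelMonoid ι] [GradedRing 𝒜] {I : Ideal S} (hI : I.IsHomogeneous 𝒜)
    (p : Ideal S) [p.IsPrime] [(p.homogeneousCore 𝒜).toIdeal.IsPrime]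
    (h : I.map (algebraMap S (Localization.AtPrime p)) ≠ ⊥) :
    I.map (algebraMap S (Localization.AtPrime (p.homogeneousCore 𝒜).toIdeal)) ≠ ⊥ := by
  obtain ⟨x, hxI, hx⟩ := (I.map_algebraMap_atPrime_ne_bot_iff p).mp h
  obtain ⟨i, hi⟩ := exists_ker_toSpanSingleton_decompose_le 𝒜 hx
  refine (I.map_algebraMap_atPrime_ne_bot_iff _).mpr ⟨_, hI i hxI, ?_⟩
  exact Ideal.IsHomogeneous.le_homogeneousCore 𝒜
    (Ideal.isHomogeneous_ker_toSpanSingleton 𝒜 (decompose 𝒜 x i).2) hi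

theorem exists_isHomogeneous_not_isSMulRegular_atPrime [AddCancelCommMonoid ι] [LinearOrder ι]
    [IsOrderedCancelAddMonoid ι] [GradedRing 𝒜] {f : S} {d : ι} (hf : f ∈ 𝒜 d)
    (h : ¬ IsSMulRegular S f) :
    ∃ (p : Ideal S) (_ : p.IsPrime), p.IsHomogeneous 𝒜 ∧
      ¬ IsSMulRegular (Localization.AtPrime p) (algebraMap S (Localization.AtPrime p) f) := by
  obtain ⟨x, hxf, hx0⟩ : ∃ x : S, f • x = 0 ∧ x ≠ 0 := by
    simpa [isSMulRegular_iff_right_eq_zero_of_smul] using h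
  have hann : ker (toSpanSingleton S S x) ≠ ⊤ := fun htop ↦ hx0 <| by
    simpa using (htop ▸ Submodule.mem_top : (1 : S) ∈ ker (toSpanSingleton S S x))
  obtain ⟨m, hm, hxm⟩ := Ideal.exists_le_maximal _ hann
  have hmap : Ideal.map (algebraMap S (Localization.AtPrime m)) (ker (toSpanSingleton S S f)) ≠ ⊥ :=
    (Ideal.map_algebraMap_atPrime_ne_bot_iff _ m).mpr ⟨x, by simpa [mul_comm] using hxf, hxm⟩
  have hcore := hm.isPrime.homogeneousCore (𝒜 := 𝒜)
  exact ⟨_, hcore, (m.homogeneousCore 𝒜).isHomogeneous,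
    not_isSMulRegular_of_map_ker_toSpanSingleton_ne_bot _
      (Ideal.IsHomogeneous.map_atPrime_homogeneousCore_ne_bot 𝒜
        (Ideal.isHomogeneous_ker_toSpanSingleton 𝒜 hf) m hmap)⟩

end Graded

/-- Let `S` be a ℤ-graded commutative ring and `f ∈ S` a homogeneous element. If the
annihilator of `f` is nonzero after localizing at a prime `p`, then it is nonzero after
localizing at the prime `p* = p.homogeneousCore`, generated by the homogeneous elements of
`p`. Consequently, `f` is a nonzerodivisor on `S` if and only if it is a nonzerodivisor on
`S_p` for every homogeneous prime `p`. -/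
theorem annihilator_localization_homogeneous_core
    (S : Type*) [CommRing S] (𝒜 : ℤ → AddSubgroup S) [GradedRing 𝒜]
    (f : S) (d : ℤ) (hf : f ∈ 𝒜 d) :
    letI I : Ideal S := LinearMap.ker (LinearMap.toSpanSingleton S S f)
    (∀ (p : Ideal S) (hp : p.IsPrime),
      haveI := hp
      haveI := hp.homogeneousCore (𝒜 := 𝒜)
      I.map (algebraMap S (Localization.AtPrime p)) ≠ ⊥ →
      I.map (algebraMap S (Localization.AtPrime (p.homogeneousCore 𝒜).toIdeal)) ≠ ⊥) ∧
    (IsSMulRegular S f ↔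
      ∀ (p : Ideal S) (hp : p.IsPrime), p.IsHomogeneous 𝒜 →
        haveI := hp
        IsSMulRegular (Localization.AtPrime p) (algebraMap S (Localization.AtPrime p) f)) := by
  refine ⟨fun p hp ↦ ?_, fun hreg p hp _ ↦ hreg.of_isLocalization _ p.primeCompl, fun hloc ↦ ?_⟩
  · have := hp.homogeneousCore (𝒜 := 𝒜)
    exact Ideal.IsHomogeneous.map_atPrime_homogeneousCore_ne_bot 𝒜
      (Ideal.isHomogeneous_ker_toSpanSingleton 𝒜 hf) p
  · by_contra hreg
    obtain ⟨p, hp, hhom, hnot⟩ := exists_isHomogeneous_not_isSMulRegular_atPrime 𝒜 hf hreg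
    exact hnot (hloc p hp hhom)
end
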